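/- arXiv:2505.18868 — 2 statements merged into one kernel-verified Lean document; each statement's English description precedes it below -/
import Mathlib

section
/- Let f ∈ ℂ{x,y} be reduced with gcd(f_x, f_y) = 1. The map φ sending h ∈ (J(f) : f) to the class of A dx + B dy in S(f)/F(f), where h·f = A f_y − B f_x, is a well-defined surjective ℂ-linear map with kernel J(f). Consequently (J(f):f)/J(f) and S(f)/F(f) are isomorphic as ℂ-vector spaces. -/
/-!
The inverse of `φ` is the map `ω ↦ h`, where `ω ∧ df = h·f`; it is well defined because
`f ≠ 0` in a domain, and onto `(J(f) : f)` because `h·f ∈ J(f)` means `h·f = A f_y - B f_x`.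
It sends `ω` into `J(f)` exactly when `ω ∈ F(f)`: if `h = a f_x + b f_y`, then
`(ω - f·(b, -a)) ∧ df = 0`, and as `f_x, f_y` are coprime in the factorial ring `ℂ[[x,y]]`,
a form annihilated by `∧ df` is a multiple of `df`.

Factoriality of `k[[x,y]] = k[[x]][[y]]` comes from Weierstrass preparation over the complete
DVR `k[[x]]`: an irreducible series is associated either to `x` or to a distinguished polynomial,
which is prime in `k[[x]][y]` by Gauss's lemma, hence in `k[[x]][[y]]` because a distinguished
polynomial generates isomorphic quotients of the two rings.
-/

open MvPowerSeries

noncomputable section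

/-- `ℂ{x,y}`, modeled as formal power series in two variables. -/
abbrev PS := MvPowerSeries (Fin 2) ℂ

/-- Formal partial derivative with respect to variable `i`. -/
noncomputable def pd (i : Fin 2) (f : PS) : PS :=
  fun m => ((m i : ℂ) + 1) * MvPowerSeries.coeff (m + Finsupp.single i 1) f

/-- The pair `(f_x, f_y)` representing the differential `df = f_x dx + f_y dy`;
a 1-form `A dx + B dy` is modeled as the pair `(A, B)`. -/
noncomputable def dd (f : PS) : PS × PS := (pd 0 f, pd 1 f)

/-- `(A dx + B dy) ∧ (C dx + D dy) = (A D - B C) dx∧dy`, recorded by its coefficient. -/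
def wedge (ω η : PS × PS) : PS := ω.1 * η.2 - ω.2 * η.1

/-- The Saito module `S(f)`: 1-forms `ω` with `ω ∧ df = h·f·dx∧dy` for some `h`. -/
def SaitoSet (f : PS) : Set (PS × PS) := {ω | ∃ h : PS, wedge ω (dd f) = h * f}

/-- `F(f) = ℂ{x,y}·df + f·Ω¹`. -/
def FSet (f : PS) : Set (PS × PS) := {ω | ∃ (p : PS) (η : PS × PS), ω = p • dd f + f • η}

/-- `S(f)` as a `ℂ{x,y}`-submodule of `Ω¹`. -/
noncomputable def SaitoMod (f : PS) : Submodule PS (PS × PS) where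
  carrier := SaitoSet f
  zero_mem' := ⟨0, by simp [wedge]⟩
  add_mem' := by
    rintro a b ⟨h₁, e₁⟩ ⟨h₂, e₂⟩
    refine ⟨h₁ + h₂, ?_⟩
    simp only [wedge, Prod.fst_add, Prod.snd_add] at *
    ring_nf
    linear_combination e₁ + e₂
  smul_mem' := by
    rintro c a ⟨h, e⟩
    refine ⟨c * h, ?_⟩
    simp only [wedge, Prod.smul_fst, Prod.smul_snd, smul_eq_mul] at *
    linear_combination c * e

/-- `F(f)` as a `ℂ{x,y}`-submodule of `Ω¹`. -/
noncomputable def FMod (f : PS) : Submodule PS (PS × PS) where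
  carrier := FSet f
  zero_mem' := ⟨0, 0, by simp⟩
  add_mem' := by
    rintro a b ⟨p₁, η₁, rfl⟩ ⟨p₂, η₂, rfl⟩
    exact ⟨p₁ + p₂, η₁ + η₂, by rw [add_smul, smul_add]; abel⟩
  smul_mem' := by
    rintro c a ⟨p, η, rfl⟩
    exact ⟨c * p, c • η, by rw [smul_add, mul_smul, smul_comm c f η]⟩

section UniqueFactorization

open PowerSeries Polynomial IsLocalRing

namespace Polynomial.IsDistinguishedAt

variable {A : Type*} [CommRing A] [IsDomain A] [IsLocalRing A] {P D : A[X]}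

theorem isUnit_of_dvd_of_isUnit_coe (hP : P.IsDistinguishedAt (maximalIdeal A)) (hD : D ∣ P)
    (hu : IsUnit (D : A⟦X⟧)) : IsUnit D := by
  obtain ⟨E, rfl⟩ := hD
  have hlc : IsUnit D.leadingCoeff :=
    IsUnit.of_mul_eq_one _ (by rw [← leadingCoeff_mul, hP.monic.leadingCoeff])
  set π := Ideal.Quotient.mk (maximalIdeal A)
  have hlc' : π D.leadingCoeff ≠ 0 := by
    rwa [Ne, Ideal.Quotient.eq_zero_iff_mem, IsLocalRing.notMem_maximalIdeal]
  have hcoeff : π (D.coeff 0) ≠ 0 := by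
    rw [Ne, Ideal.Quotient.eq_zero_iff_mem, IsLocalRing.notMem_maximalIdeal]
    simpa [PowerSeries.isUnit_iff_constantCoeff] using hu
  -- modulo the maximal ideal, `D` divides `X ^ n` and has nonzero constant term, so is constant
  obtain ⟨i, -, hi⟩ := (dvd_prime_pow (prime_X (R := A ⧸ maximalIdeal A)) _).1
    (hP.map_eq_X_pow ▸ Polynomial.map_dvd π (dvd_mul_right D E))
  have hi0 : i = 0 := by
    by_contra hne
    apply hcoeff
    rw [← coeff_map, ← Polynomial.X_dvd_iff]
    exact (dvd_pow_self X hne).trans hi.symm.dvd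
  have hdeg : D.natDegree = 0 := by
    rw [← natDegree_map_of_leadingCoeff_ne_zero π hlc']
    exact natDegree_eq_zero_of_isUnit (by simpa [hi0] using hi)
  rw [eq_C_of_natDegree_eq_zero hdeg, isUnit_C]
  rwa [leadingCoeff, hdeg] at hlc

theorem irreducible_of_irreducible_coe (hP : P.IsDistinguishedAt (maximalIdeal A))
    (hirr : Irreducible (P : A⟦X⟧)) : Irreducible P := by
  refine ⟨fun h ↦ hirr.not_isUnit (h.map (coeToPowerSeries.ringHom (R := A))),
    fun D E hDE ↦ ?_⟩
  have hDE' : (P : A⟦X⟧) = D * E := by rw [hDE, coe_mul]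
  exact (hirr.isUnit_or_isUnit hDE').imp
    (hP.isUnit_of_dvd_of_isUnit_coe (hDE ▸ dvd_mul_right D E))
    (hP.isUnit_of_dvd_of_isUnit_coe (hDE ▸ dvd_mul_left E D))

end Polynomial.IsDistinguishedAt

theorem Polynomial.IsDistinguishedAt.prime_coe {A : Type*} [CommRing A] {I : Ideal A}
    [IsAdicComplete I A] {P : A[X]} (hP : P.IsDistinguishedAt I) (hprime : Prime P) :
    Prime (P : A⟦X⟧) := by
  have hP0 : (P : A⟦X⟧) ≠ 0 := by simpa using hprime.ne_zero
  rw [← Ideal.span_singleton_prime hP0, ← Ideal.Quotient.isDomain_iff_prime]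
  have := (Ideal.Quotient.isDomain_iff_prime _).2
    ((Ideal.span_singleton_prime hprime.ne_zero).2 hprime)
  exact MulEquiv.isDomain _ hP.algEquivQuotient.toMulEquiv.symm

namespace PowerSeries

theorem C_dvd_iff_forall_dvd_coeff {R : Type*} [CommRing R] (a : R) (g : R⟦X⟧) :
    C a ∣ g ↔ ∀ n, a ∣ coeff n g := by
  refine ⟨fun ⟨c, hc⟩ n ↦ ⟨coeff n c, by rw [hc, coeff_C_mul]⟩, fun h ↦ ?_⟩
  choose c hc using h
  exact ⟨mk c, by ext n; rw [coeff_C_mul, coeff_mk, ← hc]⟩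

variable {A : Type*} [CommRing A] [IsDomain A] [IsDiscreteValuationRing A]

theorem C_dvd_iff_map_residue_eq_zero {ϖ : A} (hϖ : Irreducible ϖ) (g : A⟦X⟧) :
    C ϖ ∣ g ↔ g.map (residue A) = 0 := by
  simp_rw [C_dvd_iff_forall_dvd_coeff, PowerSeries.ext_iff, coeff_map, map_zero,
    residue_eq_zero_iff, hϖ.maximalIdeal_eq, Ideal.mem_span_singleton]

theorem prime_C_of_irreducible {ϖ : A} (hϖ : Irreducible ϖ) : Prime (C ϖ : A⟦X⟧) := by
  refine ⟨fun h ↦ hϖ.ne_zero (by simpa using congrArg constantCoeff h),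
    fun h ↦ hϖ.not_isUnit (by simpa [isUnit_iff_constantCoeff] using h), fun a b hab ↦ ?_⟩
  simp_rw [C_dvd_iff_map_residue_eq_zero hϖ, map_mul] at hab ⊢
  exact mul_eq_zero.1 hab

theorem prime_of_irreducible [IsAdicComplete (maximalIdeal A) A] {p : A⟦X⟧}
    (hp : Irreducible p) : Prime p := by
  obtain ⟨ϖ, hϖ⟩ := IsDiscreteValuationRing.exists_irreducible A
  by_cases hres : p.map (residue A) = 0
  · obtain ⟨u, rfl⟩ := (C_dvd_iff_map_residue_eq_zero hϖ p).2 hres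
    have hu : IsUnit u :=
      (hp.isUnit_or_isUnit rfl).resolve_left (prime_C_of_irreducible hϖ).not_isUnit
    exact (associated_mul_unit_right (C ϖ) u hu).prime (prime_C_of_irreducible hϖ)
  · obtain ⟨P, u, hW⟩ := p.exists_isWeierstrassFactorization hres
    have hassoc : Associated (P : A⟦X⟧) p := by
      rw [hW.eq_mul]
      exact associated_mul_unit_right _ _ hW.isUnit
    have hPirr := hW.isDistinguishedAt.irreducible_of_irreducible_coe
      (hassoc.symm.irreducible hp)
    exact hassoc.prime <| hW.isDistinguishedAt.prime_coe <|
      UniqueFactorizationMonoid.irreducible_iff_prime.1 hPirr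

instance [IsAdicComplete (maximalIdeal A) A] : UniqueFactorizationMonoid A⟦X⟧ where
  irreducible_iff_prime := ⟨prime_of_irreducible, Prime.irreducible⟩

instance {k : Type*} [Field k] : IsAdicComplete (maximalIdeal k⟦X⟧) k⟦X⟧ := by
  rw [maximalIdeal_eq_span_X]
  infer_instance

end PowerSeries

instance MvPowerSeries.uniqueFactorizationMonoid_fin_two {k : Type*} [Field k] :
    UniqueFactorizationMonoid (MvPowerSeries (Fin 2) k) :=
  (((renameEquiv k ((_root_.finSuccEquiv 1).trans (Equiv.optionCongr finOneEquiv))).trans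
    (optionEquivLeft Unit k)).toMulEquiv.symm.uniqueFactorizationMonoid
    (inferInstanceAs (UniqueFactorizationMonoid k⟦X⟧⟦X⟧)))

end UniqueFactorization

theorem IsRelPrime.exists_eq_mul_of_mul_eq_mul {R : Type*} [CommRing R] [NoZeroDivisors R]
    [DecompositionMonoid R] {p q a b : R} (h : IsRelPrime p q) (hab : a * q = b * p) :
    ∃ c, a = c * p ∧ b = c * q := by
  rcases eq_or_ne p 0 with rfl | hp
  · obtain ⟨u, rfl⟩ := isRelPrime_zero_left.1 h
    have ha : a = 0 := u.isUnit.mul_left_eq_zero.1 (by rw [hab, mul_zero])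
    exact ⟨b * ↑u⁻¹, by simp [ha], by simp⟩
  · obtain ⟨c, rfl⟩ := h.dvd_of_dvd_mul_right ⟨b, by rw [hab, mul_comm]⟩
    exact ⟨c, mul_comm _ _, mul_left_cancel₀ hp (by linear_combination -hab)⟩

section Saito

variable {f : PS}

open Classical in
def saitoCoeff (f : PS) (ω : PS × PS) : PS :=
  if h : ∃ c, wedge ω (dd f) = c * f then h.choose else 0

theorem wedge_dd_eq_saitoCoeff_mul {ω : PS × PS} (hω : ω ∈ SaitoMod f) :
    wedge ω (dd f) = saitoCoeff f ω * f := by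
  have hω' : ∃ c, wedge ω (dd f) = c * f := hω
  rw [saitoCoeff, dif_pos hω']
  exact hω'.choose_spec

theorem saitoCoeff_eq (hf : f ≠ 0) {ω : PS × PS} {c : PS} (h : wedge ω (dd f) = c * f) :
    saitoCoeff f ω = c :=
  mul_right_cancel₀ hf ((wedge_dd_eq_saitoCoeff_mul ⟨c, h⟩).symm.trans h)

theorem saitoCoeff_mem_colon {ω : PS × PS} (hω : ω ∈ SaitoMod f) :
    saitoCoeff f ω ∈ (Ideal.span {pd 0 f, pd 1 f}).colon (Ideal.span {f}) := by
  rw [Submodule.mem_colon_span_singleton, smul_eq_mul, ← wedge_dd_eq_saitoCoeff_mul hω,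
    Ideal.mem_span_pair]
  exact ⟨-ω.2, ω.1, by simp only [wedge, dd]; ring⟩

theorem exists_eq_smul_dd_of_wedge_eq_zero (hcop : IsRelPrime (pd 0 f) (pd 1 f))
    {ω : PS × PS} (h : wedge ω (dd f) = 0) : ∃ c : PS, ω = c • dd f := by
  obtain ⟨c, h₁, h₂⟩ := hcop.exists_eq_mul_of_mul_eq_mul (a := ω.1) (b := ω.2)
    (by simp only [wedge, dd] at h; linear_combination h)
  exact ⟨c, Prod.ext h₁ h₂⟩

theorem saitoCoeff_mem_span_pair_iff (hf : f ≠ 0) (hcop : IsRelPrime (pd 0 f) (pd 1 f))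
    {ω : PS × PS} (hω : ω ∈ SaitoMod f) :
    saitoCoeff f ω ∈ Ideal.span {pd 0 f, pd 1 f} ↔ ω ∈ FMod f := by
  constructor
  · rw [Ideal.mem_span_pair]
    rintro ⟨a, b, hab⟩
    have hw := wedge_dd_eq_saitoCoeff_mul hω
    obtain ⟨c, hc⟩ := exists_eq_smul_dd_of_wedge_eq_zero hcop (ω := ω - f • (b, -a)) (by
      simp only [wedge, dd, Prod.fst_sub, Prod.snd_sub, Prod.smul_fst, Prod.smul_snd,
        smul_eq_mul] at hw ⊢
      linear_combination hw - f * hab)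
    exact ⟨c, (b, -a), by rw [← hc, sub_add_cancel]⟩
  · rintro ⟨c, η, rfl⟩
    rw [saitoCoeff_eq hf (c := η.1 * pd 1 f - η.2 * pd 0 f) (by
      simp only [wedge, dd, Prod.fst_add, Prod.snd_add, Prod.smul_fst, Prod.smul_snd,
        smul_eq_mul]
      ring), Ideal.mem_span_pair]
    exact ⟨-η.2, η.1, by ring⟩

theorem saitoCoeff_eq_of_mul_eq (hf : f ≠ 0) {h A B : PS}
    (hAB : h * f = A * pd 1 f - B * pd 0 f) :
    saitoCoeff f (A, B) = h :=
  saitoCoeff_eq hf hAB.symm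

def saitoCoeffLinearMap (hf : f ≠ 0) : (SaitoMod f).restrictScalars ℂ →ₗ[ℂ]
    ((Ideal.span {pd 0 f, pd 1 f}).colon (Ideal.span {f})).restrictScalars ℂ where
  toFun ω := ⟨saitoCoeff f ω, saitoCoeff_mem_colon ω.2⟩
  map_add' ω η := Subtype.ext <| saitoCoeff_eq hf <| by
    have hω := wedge_dd_eq_saitoCoeff_mul ω.2
    have hη := wedge_dd_eq_saitoCoeff_mul η.2
    simp only [wedge, Submodule.coe_add, Prod.fst_add, Prod.snd_add] at hω hη ⊢
    linear_combination hω + hη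
  map_smul' c ω := Subtype.ext <| saitoCoeff_eq hf <| by
    have hω := wedge_dd_eq_saitoCoeff_mul ω.2
    simp only [wedge, Submodule.coe_smul, Prod.smul_fst, Prod.smul_snd, smul_mul_assoc,
      ← smul_sub] at hω ⊢
    rw [hω]
    rfl

theorem saitoCoeffLinearMap_surjective (hf : f ≠ 0) :
    Function.Surjective (saitoCoeffLinearMap hf) := by
  rintro ⟨h, hh⟩
  obtain ⟨a, b, hab⟩ := Ideal.mem_span_pair.1 (Submodule.mem_colon_span_singleton.1 hh)
  have hAB : h * f = b * pd 1 f - -a * pd 0 f := by rw [← smul_eq_mul, ← hab]; ring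
  exact ⟨⟨(b, -a), h, hAB.symm⟩, Subtype.ext (saitoCoeff_eq_of_mul_eq hf hAB)⟩

end Saito

theorem colon_iso_torsion (f : PS) (hf : Squarefree f)
    (hcop : IsRelPrime (pd 0 f) (pd 1 f))
    (J Jf : Ideal PS)
    (hJ : J = Ideal.span {pd 0 f, pd 1 f})
    (hJf : Jf = Submodule.colon J (Ideal.span {f})) :
    ∃ φ : ((Jf.restrictScalars ℂ) ⧸
            ((J.restrictScalars ℂ).comap (Jf.restrictScalars ℂ).subtype))
          ≃ₗ[ℂ]
          (((SaitoMod f).restrictScalars ℂ) ⧸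
            (((FMod f).restrictScalars ℂ).comap ((SaitoMod f).restrictScalars ℂ).subtype)),
      ∀ (h : PS) (hh : h ∈ Jf.restrictScalars ℂ) (A B : PS),
        h * f = A * pd 1 f - B * pd 0 f →
        ∀ hAB : (A, B) ∈ (SaitoMod f).restrictScalars ℂ,
          φ (Submodule.Quotient.mk ⟨h, hh⟩) = Submodule.Quotient.mk ⟨(A, B), hAB⟩ := by
  subst hJ hJf
  have hf0 := hf.ne_zero
  let Φ := (((Ideal.span {pd 0 f, pd 1 f}).restrictScalars ℂ).comap
    (((Ideal.span {pd 0 f, pd 1 f}).colon (Ideal.span {f})).restrictScalars ℂ).subtype).mkQ ∘ₗ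
      saitoCoeffLinearMap hf0
  have hΦ : Function.Surjective Φ :=
    (Submodule.mkQ_surjective _).comp (saitoCoeffLinearMap_surjective hf0)
  have hker : ((FMod f).restrictScalars ℂ).comap ((SaitoMod f).restrictScalars ℂ).subtype =
      LinearMap.ker Φ := by
    ext ω
    simp only [Submodule.mem_comap, LinearMap.mem_ker, Φ, LinearMap.comp_apply,
      Submodule.mkQ_apply, Submodule.Quotient.mk_eq_zero]
    exact (saitoCoeff_mem_span_pair_iff hf0 hcop ω.2).symm
  refine ⟨((Submodule.quotEquivOfEq _ _ hker).trans (Φ.quotKerEquivOfSurjective hΦ)).symm,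
    fun h hh A B hAB hmem ↦ ?_⟩
  rw [LinearEquiv.symm_apply_eq]
  simp only [LinearEquiv.trans_apply, Submodule.quotEquivOfEq_mk,
    LinearMap.quotKerEquivOfSurjective_apply_mk]
  exact congrArg Submodule.Quotient.mk (Subtype.ext (saitoCoeff_eq_of_mul_eq hf0 hAB).symm)
end
end

section
/- Let f ∈ ℂ{x,y} be reduced with multiplicity m(f) > 1 (i.e., f ∈ ⟨x,y⟩²). If there exists ω ∈ S(f) whose cofactor h (with ω ∧ df = h·f·dx∧dy) is a unit, then {ω, df} is a Saito basis of S(f), i.e., ω ∧ df = u·f·dx∧dy with u a unit. Conversely, if {ω₁, ω₂} is a Saito basis of S(f) with ω₂ ∈ F(f), say ω₂ = h₁·df + f·(C dx + D dy), and ω₁ = A dx + B dy, then the cofactor of ω₁ is a unit. -/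
open MvPowerSeries

noncomputable section

/-!
Suppose `A ∂_y f - B ∂_x f = h f` with `A(0) ≠ 0`. The solution of `ψ' = -(B/A)(ψ(y), y)`,
`ψ(0) = 0`, is an integral curve `x = ψ(y)` of `A ∂_y - B ∂_x` through the origin. Along it `f` and
`∂_x f` satisfy linear first order ODEs, and both vanish at the origin because `f ∈ ⟨x, y⟩²`; so
they vanish along the curve and `(x - ψ(y))² ∣ f`, contradicting squarefreeness. Hence `A(0) = 0`
and symmetrically `B(0) = 0`. For `ω₂ = h₁ df + f (C dx + D dy)` the cofactor of `{ω₁, ω₂}` is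
`u = h₁ h + (A D - B C)`, so `u(0) = h₁(0) h(0)` and `h` is a unit.
-/

theorem Squarefree.map_mulEquiv {M N : Type*} [Monoid M] [Monoid N] (e : M ≃* N) {x : M}
    (hx : Squarefree x) : Squarefree (e x) := fun y hy => by
  simpa using (hx (e.symm y) (by simpa using map_dvd e.symm hy)).map e

theorem Derivation.map_mem_of_mem_sq {R A : Type*} [CommSemiring R] [CommRing A] [Algebra R A]
    (D : Derivation R A A) {I : Ideal A} {x : A} (hx : x ∈ I ^ 2) : D x ∈ I := by
  rw [pow_two] at hx
  refine Submodule.mul_induction_on hx (fun p hp q hq => ?_) (fun x y hx hy => ?_)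
  · rw [D.leibniz, smul_eq_mul, smul_eq_mul]
    exact I.add_mem (I.mul_mem_right _ hp) (I.mul_mem_right _ hq)
  · rw [map_add]
    exact I.add_mem hx hy

namespace PowerSeries

section evalAt

variable {A : Type*} [CommRing A] {I : Ideal A} {ψ : A}

theorem isDistinguishedAt_X_sub_C (hψ : ψ ∈ I) :
    (Polynomial.X - Polynomial.C ψ).IsDistinguishedAt I where
  mem hn := by
    obtain rfl : _ = 0 := Nat.lt_one_iff.mp (hn.trans_le (Polynomial.natDegree_X_sub_C_le ψ))
    simpa using hψ
  monic := Polynomial.monic_X_sub_C ψ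

variable [IsAdicComplete I A]

/-- Substitution `X ↦ ψ`, through Weierstrass division: `A⟦X⟧ ⧸ (X - ψ) ≃ A[X] ⧸ (X - ψ) ≃ A`. -/
noncomputable def evalAt (hψ : ψ ∈ I) : A⟦X⟧ →ₐ[A] A :=
  ((isDistinguishedAt_X_sub_C hψ).algEquivQuotient.symm.trans
    (Polynomial.quotientSpanXSubCAlgEquiv ψ)).toAlgHom.comp (Ideal.Quotient.mkₐ A _)

theorem evalAt_eq_zero_iff (hψ : ψ ∈ I) {P : A⟦X⟧} : evalAt hψ P = 0 ↔ X - C ψ ∣ P := by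
  rw [evalAt, AlgHom.comp_apply, AlgEquiv.coe_toAlgHom, map_eq_zero_iff _ (AlgEquiv.injective _),
    Ideal.Quotient.mkₐ_eq_mk, Ideal.Quotient.eq_zero_iff_dvd]
  simp

theorem evalAt_C (hψ : ψ ∈ I) (a : A) : evalAt hψ (C a) = a := by
  simpa using (evalAt hψ).commutes a

theorem evalAt_X (hψ : ψ ∈ I) : evalAt hψ X = ψ := by
  have h := (evalAt_eq_zero_iff hψ).mpr (dvd_refl (X - C ψ))
  rwa [map_sub, evalAt_C, sub_eq_zero] at h

theorem exists_eq_C_evalAt_add_mul (hψ : ψ ∈ I) (P : A⟦X⟧) :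
    ∃ Q, P = C (evalAt hψ P) + (X - C ψ) * Q := by
  obtain ⟨Q, hQ⟩ := (evalAt_eq_zero_iff hψ).mp
    (show evalAt hψ (P - C (evalAt hψ P)) = 0 by rw [map_sub, evalAt_C, sub_self])
  exact ⟨Q, by rw [← hQ, add_sub_cancel]⟩

theorem evalAt_sub_constantCoeff_mem (hψ : ψ ∈ I) (P : A⟦X⟧) :
    evalAt hψ P - constantCoeff P ∈ I := by
  obtain ⟨Q, hQ⟩ := exists_eq_C_evalAt_add_mul hψ P
  have h := congrArg constantCoeff hQ
  rw [map_add, map_mul, constantCoeff_C, map_sub, constantCoeff_X, constantCoeff_C,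
    zero_sub] at h
  rw [h, sub_add_cancel_left, neg_mul, neg_neg]
  exact I.mul_mem_right _ hψ

theorem dvd_evalAt_sub_evalAt {ψ' : A} (hψ : ψ ∈ I) (hψ' : ψ' ∈ I) (P : A⟦X⟧) :
    ψ' - ψ ∣ evalAt hψ' P - evalAt hψ P := by
  obtain ⟨Q, hQ⟩ := exists_eq_C_evalAt_add_mul hψ P
  refine ⟨evalAt hψ' Q, ?_⟩
  have h : evalAt hψ' P = evalAt hψ P + (ψ' - ψ) * evalAt hψ' Q := by
    conv_lhs => rw [hQ]
    rw [map_add, map_mul, map_sub, evalAt_X, evalAt_C, evalAt_C]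
  rw [h, add_sub_cancel_left]

end evalAt

section derivationMapCoeffs

variable {R B : Type*} [CommSemiring R] [CommSemiring B] [Algebra R B] (d : Derivation R B B)

noncomputable def derivationMapCoeffs : Derivation R B⟦X⟧ B⟦X⟧ where
  toFun P := mk fun n => d (coeff n P)
  map_add' P Q := by ext; simp
  map_smul' r P := by ext; simp
  map_one_eq_zero' := by
    ext n
    simp only [LinearMap.coe_mk, AddHom.coe_mk, coeff_mk, coeff_one]
    split_ifs <;> simp
  leibniz' P Q := by
    ext n
    simp only [LinearMap.coe_mk, AddHom.coe_mk, smul_eq_mul, mul_comm Q]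
    simp [coeff_mul, Finset.sum_add_distrib, mul_comm (coeff _ Q)]

@[simp]
theorem coeff_derivationMapCoeffs (P : B⟦X⟧) (n : ℕ) :
    coeff n (derivationMapCoeffs d P) = d (coeff n P) := by
  simp [derivationMapCoeffs]

theorem derivationMapCoeffs_C (b : B) : derivationMapCoeffs d (C b) = C (d b) := by
  ext n
  rw [coeff_derivationMapCoeffs, coeff_C, coeff_C]
  split_ifs <;> simp

theorem derivationMapCoeffs_X : derivationMapCoeffs d X = 0 := by
  ext n
  rw [coeff_derivationMapCoeffs, coeff_X]
  split_ifs <;> simp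

theorem derivative_derivationMapCoeffs (P : B⟦X⟧) :
    d⁄dX B (derivationMapCoeffs d P) = derivationMapCoeffs d (d⁄dX B P) := by
  ext n
  simp [coeff_derivative, Derivation.leibniz, mul_comm]

end derivationMapCoeffs

theorem derivation_evalAt {R A : Type*} [CommRing R] [CommRing A] [Algebra R A] {I : Ideal A}
    [IsAdicComplete I A] (d : Derivation R A A) {ψ : A} (hψ : ψ ∈ I) (P : A⟦X⟧) :
    d (evalAt hψ P) = evalAt hψ (d⁄dX A P) * d ψ + evalAt hψ (derivationMapCoeffs d P) := by
  obtain ⟨Q, hQ⟩ := exists_eq_C_evalAt_add_mul hψ P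
  have hX : d⁄dX A P = (X - C ψ) * d⁄dX A Q + Q := by
    conv_lhs => rw [hQ]
    simp [Derivation.leibniz]
  have hY : derivationMapCoeffs d P =
      C (d (evalAt hψ P)) + (X - C ψ) * derivationMapCoeffs d Q - C (d ψ) * Q := by
    conv_lhs => rw [hQ]
    simp [Derivation.leibniz, derivationMapCoeffs_C, derivationMapCoeffs_X]
    ring
  rw [hX, hY]
  simp [evalAt_X, evalAt_C]
  ring

theorem not_isUnit_X_sub_C {K : Type*} [Field K] {ψ : K⟦X⟧} (hψ : ψ ∈ Ideal.span {X}) :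
    ¬IsUnit (X - C ψ : K⟦X⟧⟦X⟧) := by
  intro hunit
  have h := (hunit.map constantCoeff).map constantCoeff
  rw [Ideal.mem_span_singleton, X_dvd_iff] at hψ
  simp [hψ] at h

section integralCurve

variable {K : Type*} [Field K] [CharZero K]

local notation "∂ₓ" => d⁄dX K⟦X⟧
local notation "∂ᵧ" => derivationMapCoeffs (d⁄dX K)

theorem eq_zero_of_derivative_eq_mul {c F : K⟦X⟧} (h : d⁄dX K F = c * F)
    (h₀ : constantCoeff F = 0) : F = 0 := by
  ext n
  induction n using Nat.strong_induction_on with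
  | _ n ih =>
    cases n with
    | zero => simpa using h₀
    | succ n =>
      have hn := congrArg (coeff n) h
      rw [coeff_derivative, coeff_mul, Finset.sum_eq_zero fun x hx => by
        rw [Finset.HasAntidiagonal.mem_antidiagonal] at hx
        rw [ih x.2 (by omega), map_zero, mul_zero]] at hn
      simpa [Nat.cast_add_one_ne_zero] using hn

/-- The coefficients of the solution of `ψ' = G(ψ(Y), Y)`, `ψ(0) = 0`: the `n`-th one only
involves `ψ` modulo `Y ^ n`, through the truncation `Y * ∑_{0 < k < n} ψₖ Y ^ (k - 1)`. -/
noncomputable def integralCurveCoeff (G : K⟦X⟧⟦X⟧) (n : ℕ) : K :=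
  if n = 0 then 0 else
    (n : K)⁻¹ * coeff (n - 1) (evalAt (Ideal.mul_mem_right
      (mk fun k => if h : k + 1 < n then integralCurveCoeff G (k + 1) else 0) _
      (Ideal.mem_span_singleton_self X)) G)
termination_by n
decreasing_by omega

theorem exists_derivative_eq_evalAt (G : K⟦X⟧⟦X⟧) :
    ∃ (ψ : K⟦X⟧) (hψ : ψ ∈ Ideal.span {X}), d⁄dX K ψ = evalAt hψ G := by
  have h₀ : integralCurveCoeff G 0 = 0 := by rw [integralCurveCoeff, if_pos rfl]
  have hψ : mk (integralCurveCoeff G) ∈ Ideal.span {X} := Ideal.mem_span_singleton.mpr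
    (X_dvd_iff.mpr (by rw [← coeff_zero_eq_constantCoeff_apply, coeff_mk, h₀]))
  refine ⟨mk (integralCurveCoeff G), hψ, ?_⟩
  ext n
  set T : K⟦X⟧ := mk fun k => if h : k + 1 < n + 1 then integralCurveCoeff G (k + 1) else 0
  have hT : X * T ∈ Ideal.span {X} := Ideal.mul_mem_right _ _ (Ideal.mem_span_singleton_self X)
  have hrec : integralCurveCoeff G (n + 1) = ((n : K) + 1)⁻¹ * coeff n (evalAt hT G) := by
    rw [integralCurveCoeff, if_neg n.succ_ne_zero]
    push_cast
    rfl
  have htrunc : X ^ (n + 1) ∣ mk (integralCurveCoeff G) - X * T := by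
    refine X_pow_dvd_iff.mpr fun k hk => ?_
    cases k with
    | zero => simp [h₀]
    | succ k => simp [T, coeff_succ_X_mul, show k < n by omega]
  have hcongr :=
    X_pow_dvd_iff.mp (htrunc.trans (dvd_evalAt_sub_evalAt hT hψ G)) n (lt_add_one n)
  rw [map_sub, sub_eq_zero] at hcongr
  rw [coeff_derivative, coeff_mk, hrec, hcongr, mul_comm,
    mul_inv_cancel_left₀ (Nat.cast_add_one_ne_zero n)]

/-- `X = ψ(Y)` is an integral curve of `∂ᵧ - 𝔹 ∂ₓ`, so by the chain rule `hP` becomes the linear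
ODE `(P ∘ ψ)' = c (P ∘ ψ)`. -/
theorem evalAt_eq_zero_of_integralCurve {𝔹 P : K⟦X⟧⟦X⟧} {ψ c : K⟦X⟧}
    (hψ : ψ ∈ Ideal.span {X}) (hcurve : d⁄dX K ψ = evalAt hψ (-𝔹))
    (hP : evalAt hψ (∂ᵧ P - 𝔹 * ∂ₓ P) = c * evalAt hψ P)
    (h₀ : constantCoeff (constantCoeff P) = 0) : evalAt hψ P = 0 := by
  refine eq_zero_of_derivative_eq_mul (c := c) ?_ ?_
  · rw [derivation_evalAt, hcurve, ← hP]
    simp only [map_sub, map_mul, map_neg]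
    ring
  · have h := evalAt_sub_constantCoeff_mem hψ P
    rwa [Ideal.mem_span_singleton, X_dvd_iff, map_sub, h₀, sub_zero] at h

theorem exists_sq_dvd_of_derivation_eq {𝔹 H F : K⟦X⟧⟦X⟧}
    (hF : ∂ᵧ F - 𝔹 * ∂ₓ F = H * F) (h₀ : constantCoeff (constantCoeff F) = 0)
    (h₁ : constantCoeff (constantCoeff (∂ₓ F)) = 0) :
    ∃ (ψ : K⟦X⟧) (_ : ψ ∈ Ideal.span {X}), (X - C ψ) ^ 2 ∣ F := by
  obtain ⟨ψ, hψ, hcurve⟩ := exists_derivative_eq_evalAt (-𝔹)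
  have hF₀ : evalAt hψ F = 0 :=
    evalAt_eq_zero_of_integralCurve hψ hcurve (by rw [hF, map_mul]) h₀
  have hF₁ : evalAt hψ (∂ₓ F) = 0 := by
    refine evalAt_eq_zero_of_integralCurve hψ hcurve (c := evalAt hψ (H + ∂ₓ 𝔹)) ?_ h₁
    have hF' := congrArg (∂ₓ) hF
    simp only [map_sub, Derivation.leibniz, smul_eq_mul] at hF'
    rw [← derivative_derivationMapCoeffs,
      show ∂ₓ (∂ᵧ F) - 𝔹 * ∂ₓ (∂ₓ F) = (H + ∂ₓ 𝔹) * ∂ₓ F + F * ∂ₓ H by linear_combination hF',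
      map_add, map_mul, map_mul, hF₀, zero_mul, add_zero]
  obtain ⟨Q, rfl⟩ := (evalAt_eq_zero_iff hψ).mp hF₀
  have hQ : evalAt hψ Q = 0 := by
    simpa [Derivation.leibniz, evalAt_X, evalAt_C] using hF₁
  obtain ⟨Q', rfl⟩ := (evalAt_eq_zero_iff hψ).mp hQ
  exact ⟨ψ, hψ, Q', by ring⟩

theorem not_squarefree_of_derivation_eq {𝔹 H F : K⟦X⟧⟦X⟧}
    (hF : ∂ᵧ F - 𝔹 * ∂ₓ F = H * F) (h₀ : constantCoeff (constantCoeff F) = 0)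
    (h₁ : constantCoeff (constantCoeff (∂ₓ F)) = 0) : ¬Squarefree F := fun hsq => by
  obtain ⟨ψ, hψ, hdvd⟩ := exists_sq_dvd_of_derivation_eq hF h₀ h₁
  exact not_isUnit_X_sub_C hψ (hsq _ (sq (X - C ψ) ▸ hdvd))

end integralCurve

end PowerSeries

open scoped PowerSeries

namespace MvPowerSeries

section finTwoEquiv

variable {R : Type*} [CommSemiring R] {a b : Fin 2}

def finTwoEquivOptionUnit (hab : a ≠ b) : Fin 2 ≃ Option Unit where
  toFun i := if i = a then none else some ()
  invFun o := o.elim a fun _ => b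
  left_inv i := by
    by_cases h : i = a
    · simp [h]
    · simp [h]
      omega
  right_inv o := by cases o <;> simp [hab.symm]

/-- `R⟦x_a, x_b⟧ ≃ R⟦x_b⟧⟦x_a⟧`. -/
noncomputable def finTwoEquiv (hab : a ≠ b) :
    MvPowerSeries (Fin 2) R ≃ₐ[R] PowerSeries (PowerSeries R) :=
  (renameEquiv R (finTwoEquivOptionUnit hab)).trans (optionEquivLeft Unit R)

theorem coeff_coeff_finTwoEquiv (hab : a ≠ b) (p : MvPowerSeries (Fin 2) R) (i j : ℕ) :
    PowerSeries.coeff j (PowerSeries.coeff i (finTwoEquiv hab p)) =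
      coeff (Finsupp.single a i + Finsupp.single b j) p := by
  have h : (Finsupp.single () j).optionElim i = Finsupp.embDomain
      (finTwoEquivOptionUnit hab).toEmbedding (Finsupp.single a i + Finsupp.single b j) := by
    ext o
    cases o <;> simp [finTwoEquivOptionUnit, Finsupp.embDomain_add, hab.symm]
  rw [PowerSeries.coeff, finTwoEquiv, AlgEquiv.trans_apply, coeff_coeff_optionEquivLeft, h]
  exact coeff_embDomain_rename _ _ _

theorem constantCoeff_constantCoeff_finTwoEquiv (hab : a ≠ b) (p : MvPowerSeries (Fin 2) R) :
    PowerSeries.constantCoeff (PowerSeries.constantCoeff (finTwoEquiv hab p)) =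
      constantCoeff p := by
  simpa using coeff_coeff_finTwoEquiv hab p 0 0

theorem finTwoEquiv_pderiv_left (hab : a ≠ b) (p : MvPowerSeries (Fin 2) R) :
    finTwoEquiv hab (pderiv R a p) = d⁄dX (PowerSeries R) (finTwoEquiv hab p) := by
  ext i j
  rw [coeff_coeff_finTwoEquiv, coeff_pderiv, PowerSeries.coeff_derivative,
    show ((i : PowerSeries R) + 1) = PowerSeries.C ((i : R) + 1) by simp,
    PowerSeries.coeff_mul_C, coeff_coeff_finTwoEquiv, Finsupp.single_add a i 1]
  simp [hab.symm, add_right_comm]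

theorem finTwoEquiv_pderiv_right (hab : a ≠ b) (p : MvPowerSeries (Fin 2) R) :
    finTwoEquiv hab (pderiv R b p) =
      PowerSeries.derivationMapCoeffs (d⁄dX R) (finTwoEquiv hab p) := by
  ext i j
  rw [coeff_coeff_finTwoEquiv, coeff_pderiv, PowerSeries.coeff_derivationMapCoeffs,
    PowerSeries.coeff_derivative, coeff_coeff_finTwoEquiv, Finsupp.single_add b j 1]
  simp [hab, add_assoc]

end finTwoEquiv

theorem constantCoeff_eq_zero_of_mul_pderiv_sub_mul_pderiv {K : Type*} [Field K] [CharZero K]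
    {a b : Fin 2} (hab : a ≠ b) {f A B h : MvPowerSeries (Fin 2) K} (hf : Squarefree f)
    (h₀ : constantCoeff f = 0) (h₁ : constantCoeff (pderiv K a f) = 0)
    (heq : A * pderiv K b f - B * pderiv K a f = h * f) : constantCoeff A = 0 := by
  by_contra hA
  obtain ⟨u, rfl⟩ := isUnit_iff_constantCoeff.mpr (isUnit_iff_ne_zero.mpr hA)
  have heq' : pderiv K b f - (B * ↑u⁻¹) * pderiv K a f = (h * ↑u⁻¹) * f := by
    linear_combination (↑u⁻¹ : MvPowerSeries (Fin 2) K) * heq - pderiv K b f * u.inv_mul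
  have hW := congrArg (finTwoEquiv hab) heq'
  rw [map_sub, map_mul, map_mul, map_mul, finTwoEquiv_pderiv_left,
    finTwoEquiv_pderiv_right] at hW
  refine PowerSeries.not_squarefree_of_derivation_eq hW ?_ ?_
    (hf.map_mulEquiv (finTwoEquiv hab).toMulEquiv)
  · rwa [constantCoeff_constantCoeff_finTwoEquiv]
  · rwa [← finTwoEquiv_pderiv_left, constantCoeff_constantCoeff_finTwoEquiv]

end MvPowerSeries

theorem pd_eq_pderiv (i : Fin 2) (f : PS) : pd i f = pderiv ℂ i f := by
  ext m
  rw [coeff_pderiv]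
  exact mul_comm _ _

theorem wedge_smul_add_smul (ω α β : PS × PS) (p q : PS) :
    wedge ω (p • α + q • β) = p * wedge ω α + q * wedge ω β := by
  simp only [wedge, Prod.fst_add, Prod.snd_add, Prod.smul_fst, Prod.smul_snd, smul_eq_mul]
  ring

theorem constantCoeff_wedge (ω η : PS × PS) :
    constantCoeff (wedge ω η) =
      constantCoeff ω.1 * constantCoeff η.2 - constantCoeff ω.2 * constantCoeff η.1 := by
  simp [wedge]

theorem constantCoeff_eq_zero_of_mem_saitoSet {f : PS} (hf : Squarefree f)
    (hmult : f ∈ (Ideal.span {(X 0 : PS), X 1}) ^ 2) {ω : PS × PS} (hω : ω ∈ SaitoSet f) :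
    constantCoeff ω.1 = 0 ∧ constantCoeff ω.2 = 0 := by
  obtain ⟨h, hω⟩ := hω
  have hI : Ideal.span {(X 0 : PS), X 1} ≤ RingHom.ker constantCoeff :=
    Ideal.span_le.mpr (by simp [Set.insert_subset_iff])
  have h₀ : constantCoeff f = 0 := hI (Ideal.pow_le_self two_ne_zero hmult)
  have h₁ (i : Fin 2) : constantCoeff (pderiv ℂ i f) = 0 :=
    hI ((pderiv ℂ i).map_mem_of_mem_sq hmult)
  simp only [wedge, dd, pd_eq_pderiv] at hω
  refine ⟨constantCoeff_eq_zero_of_mul_pderiv_sub_mul_pderiv (by decide) hf h₀ (h₁ 0) hω, ?_⟩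
  have hω' : -ω.2 * pderiv ℂ 0 f - -ω.1 * pderiv ℂ 1 f = h * f := by linear_combination hω
  simpa using constantCoeff_eq_zero_of_mul_pderiv_sub_mul_pderiv (by decide) hf h₀ (h₁ 1) hω'

theorem saito_basis_with_df (f : PS) (hf : Squarefree f)
    (hmult : f ∈ (Ideal.span {(X 0 : PS), X 1}) ^ 2) :
    (∀ ω : PS × PS, ∀ h : PS, wedge ω (dd f) = h * f → IsUnit h →
        ∃ u : PS, IsUnit u ∧ wedge ω (dd f) = u * f) ∧
    (∀ A B C D h₁ u : PS, IsUnit u →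
        wedge (A, B) (h₁ • dd f + f • ((C, D) : PS × PS)) = u * f →
        (A, B) ∈ SaitoSet f →
        ∃ h : PS, wedge (A, B) (dd f) = h * f ∧ IsUnit h) := by
  refine ⟨fun ω h hω hh => ⟨h, hh, hω⟩, fun A B C D h₁ u hu hbasis hS => ?_⟩
  obtain ⟨hA, hB⟩ := constantCoeff_eq_zero_of_mem_saitoSet hf hmult hS
  obtain ⟨h, hω⟩ := hS
  have hu' : u = h₁ * h + wedge (A, B) (C, D) :=
    mul_right_cancel₀ hf.ne_zero (by rw [← hbasis, wedge_smul_add_smul, hω]; ring)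
  have hcoeff : constantCoeff u = constantCoeff h₁ * constantCoeff h := by
    simp [hu', constantCoeff_wedge, hA, hB]
  have hunit := isUnit_iff_constantCoeff.mp hu
  rw [hcoeff] at hunit
  exact ⟨h, hω, isUnit_iff_constantCoeff.mpr (isUnit_of_mul_isUnit_right hunit)⟩
end
end
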